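/- Let (R, m, k) be a one-dimensional Cohen–Macaulay local ring with minimal multiplicity, let M and N be maximal Cohen–Macaulay R-modules, and set L := Ann_R(Ext¹_R(M, N)). Then L = m if and only if L is a reduction of m, i.e., L ⊆ m and m^{s+1} = L·m^s for some s ≥ 0 (equivalently, the integral closure of L equals m). -/

import Mathlib

open IsLocalRing

universe u

/-- The Ext module `Ext^n_R(M, N)`, via the derived functor `Ext` of Mathlib. -/
noncomputable abbrev extModule (R : Type u) [CommRing R] (M N : Type u)
    [AddCommGroup M] [Module R M] [AddCommGroup N] [Module R N] (n : ℕ) : ModuleCat.{u} R :=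
  ((Ext R (ModuleCat.{u} R) n).obj (Opposite.op (ModuleCat.of R M))).obj (ModuleCat.of R N)

/-- `M` is a torsion-free `R`-module: nonzerodivisors of `R` act injectively on `M`. -/
def TorsionFreeMod (R : Type*) (M : Type*) [CommRing R] [AddCommGroup M] [Module R M] : Prop :=
  ∀ r ∈ nonZeroDivisors R, ∀ x : M, r • x = 0 → x = 0

/-! Take a minimal free cover `0 → K → F → M → 0`, so that `K ⊆ m F` and `Ext¹(M, N)` is a
quotient of `Hom(K, N)`. Since `m ^ 2 = y m` gives `m ^ (t + 1) = y ^ t m`, and `M` is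
torsion-free, every `x ∈ m ^ t` acts on `K` as `y ^ t κ_x` for an endomorphism `κ_x` of `K`.
If `m ^ (s + 1) = L m ^ s`, write `y ^ (s + 1) = ∑ lᵢ xᵢ` with `lᵢ ∈ L` and `xᵢ ∈ m ^ s`;
cancelling `y ^ s` gives `y • id_K = ∑ lᵢ κ_{xᵢ}`, so precomposition shows that `y` kills
`Ext¹(M, N)`, and then so does every `x = y κ_x ∈ m`. -/

open scoped Pointwise

namespace CategoryTheory

open Limits Projective

lemma Projective.d_comp_self {C : Type*} [Category C] [Abelian C] [EnoughProjectives C]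
    {X Y : C} (f : X ⟶ Y) : d f ≫ f = 0 :=
  (Category.assoc _ _ _).trans
    ((congrArg (π (kernel f) ≫ ·) (kernel.condition f)).trans comp_zero)

namespace ProjectiveResolution

section OfEpi

variable {C : Type*} [Category C] [Abelian C] [EnoughProjectives C] {Z P₀ : C} (p : P₀ ⟶ Z)

/- The construction of `ProjectiveResolution.of`, started from a given epimorphism `p` instead
of `Projective.π Z`. -/
noncomputable def ofEpiComplex : ChainComplex C ℕ :=
  ChainComplex.mk' P₀ (syzygies p) (d p) (fun f => ⟨_, d f, d_comp_self f⟩)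

lemma ofEpiComplex_d_one_zero : (ofEpiComplex p).d 1 0 = d p := by
  simp [ofEpiComplex]

lemma ofEpiComplex_exactAt_succ (n : ℕ) : (ofEpiComplex p).ExactAt (n + 1) := by
  rw [HomologicalComplex.exactAt_iff' _ (n + 1 + 1) (n + 1) n (by simp) (by simp)]
  refine ShortComplex.exact_of_iso ?_ (exact_d_f ((ofEpiComplex p).d (n + 1) n))
  refine ShortComplex.isoMk (ChainComplex.mk'XIso P₀ (syzygies p) (d p)
    (fun f => ⟨_, d f, d_comp_self f⟩) n).symm (Iso.refl _) (Iso.refl _) ?_ ?_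
  · have h := ChainComplex.mk'_d P₀ (syzygies p) (d p) (fun f => ⟨_, d f, d_comp_self f⟩) n
    exact (congrArg (_ ≫ ·) h).trans ((Iso.inv_hom_id_assoc _ _).trans (Category.comp_id _).symm)
  · exact (Category.id_comp _).trans (Category.comp_id _).symm

instance [Projective P₀] (n : ℕ) : Projective ((ofEpiComplex p).X n) := by
  obtain (_ | _ | _ | n) := n
  · exact inferInstanceAs (Projective P₀)
  all_goals apply projective_over

noncomputable def ofEpi [Projective P₀] [Epi p] : ProjectiveResolution Z where
  complex := ofEpiComplex p
  π := (ChainComplex.toSingle₀Equiv _ _).symm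
    ⟨p, by rw [ofEpiComplex_d_one_zero]; exact d_comp_self p⟩
  quasiIso := ⟨fun n => by
    cases n
    · rw [ChainComplex.quasiIsoAt₀_iff, ShortComplex.quasiIso_iff_of_zeros']
      · refine (ShortComplex.exact_and_epi_g_iff_of_iso ?_).2
          ⟨exact_d_f p, by dsimp; infer_instance⟩
        refine ShortComplex.isoMk (Iso.refl _) (Iso.refl _) (Iso.refl _)
          ((Category.id_comp _).trans ((ofEpiComplex_d_one_zero p).symm.trans
            (Category.comp_id _).symm)) ?_
        erw [Category.id_comp, Category.comp_id]
        exact (ChainComplex.toSingle₀Equiv_symm_apply_f_zero (C := ofEpiComplex p) _ _).symm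
      all_goals rfl
    · rw [quasiIsoAt_iff_exactAt']
      · apply ofEpiComplex_exactAt_succ
      · apply ChainComplex.exactAt_succ_single_obj⟩

lemma ofEpi_π_f_zero [Projective P₀] [Epi p] : (ofEpi p).π.f 0 = p :=
  ChainComplex.toSingle₀Equiv_symm_apply_f_zero _ _

end OfEpi

section ModuleCat

variable {R : Type u} [CommRing R] {X : ModuleCat.{u} R} (P : ProjectiveResolution X)
  (Y : ModuleCat.{u} R)

lemma exists_surjective_ker_d_to_ext_one :
    ∃ φ : LinearMap.ker ((P.complex.linearYonedaObj R Y).d 1 2).hom →ₗ[R]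
      ((Ext R (ModuleCat.{u} R) 1).obj (Opposite.op X)).obj Y, Function.Surjective φ := by
  let S := (P.complex.linearYonedaObj R Y).sc' 0 1 2
  let e := P.isoExt 1 Y ≪≫ (P.complex.linearYonedaObj R Y).homologyIsoSc' 0 1 2
    ((ComplexShape.up ℕ).prev_eq' rfl) ((ComplexShape.up ℕ).next_eq' rfl) ≪≫
      S.moduleCatHomologyIso
  exact ⟨(S.moduleCatLeftHomologyData.π ≫ e.inv).hom,
    (ModuleCat.epi_iff_surjective _).mp inferInstance⟩

lemma exact_d_one_zero_π_f_zero : Function.Exact (P.complex.d 1 0).hom (P.π.f 0).hom :=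
  LinearMap.exact_iff.mpr ((ShortComplex.moduleCat_exact_iff_range_eq_ker _).mp P.exact₀).symm

lemma exact_d_two_one_d_one_zero :
    Function.Exact (P.complex.d 2 1).hom (P.complex.d 1 0).hom :=
  LinearMap.exact_iff.mpr
    ((ShortComplex.moduleCat_exact_iff_range_eq_ker _).mp (P.exact_succ 0)).symm

lemma exists_surjective_hom_ker_to_ext_one :
    ∃ δ : (LinearMap.ker (P.π.f 0).hom →ₗ[R] Y) →ₗ[R]
      ((Ext R (ModuleCat.{u} R) 1).obj (Opposite.op X)).obj Y, Function.Surjective δ := by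
  obtain ⟨φ, hφ⟩ := P.exists_surjective_ker_d_to_ext_one Y
  have h₀ := P.exact_d_one_zero_π_f_zero
  let q := (P.complex.d 1 0).hom.codRestrict _
    fun x => LinearMap.mem_ker.mpr (h₀.apply_apply_eq_zero x)
  have hq : Function.Surjective q := fun ⟨k, hk⟩ => by
    obtain ⟨x, rfl⟩ := (h₀ k).mp hk
    exact ⟨x, rfl⟩
  have hexact : Function.Exact (P.complex.d 2 1).hom q := by
    rw [LinearMap.exact_iff, LinearMap.ker_codRestrict]
    exact LinearMap.exact_iff.mp P.exact_d_two_one_d_one_zero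
  have hlift := LinearMap.exact_lcomp_of_exact_of_surjective Y hexact hq
  let L := ModuleCat.homLinearEquiv.symm.toLinearMap ∘ₗ LinearMap.lcomp R Y q
  have hL : ∀ f, L f ∈ LinearMap.ker ((P.complex.linearYonedaObj R Y).d 1 2).hom := fun f =>
    ModuleCat.hom_ext (hlift.apply_apply_eq_zero f)
  refine ⟨φ ∘ₗ L.codRestrict _ hL, hφ.comp fun ⟨g, hg⟩ => ?_⟩
  obtain ⟨f, hf⟩ := (hlift g.hom).mp (congrArg ModuleCat.Hom.hom hg)
  exact ⟨f, Subtype.ext (ModuleCat.hom_ext hf)⟩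

end ModuleCat

end ProjectiveResolution

end CategoryTheory

section Divisibility

variable {R : Type*} [CommRing R]

lemma Ideal.mem_nonZeroDivisors_of_sq_eq_span_mul {I : Ideal R} {r y : R} (hrI : r ∈ I)
    (hr : r ∈ nonZeroDivisors R) (hI : I ^ 2 = Ideal.span {y} * I) : y ∈ nonZeroDivisors R := by
  have hrr : r * r ∈ Ideal.span {y} := by
    have h : r * r ∈ I ^ 2 := by
      rw [sq]
      exact Ideal.mul_mem_mul hrI hrI
    rw [hI] at h
    exact Ideal.mul_le_left h
  obtain ⟨c, hc⟩ := Ideal.mem_span_singleton'.mp hrr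
  have hcy : c * y ∈ nonZeroDivisors R := by
    rw [hc]
    exact mul_mem_nonZeroDivisors.mpr ⟨hr, hr⟩
  exact (mul_mem_nonZeroDivisors.mp hcy).2

lemma Ideal.pow_succ_eq_span_pow_mul {I : Ideal R} {y : R} (hI : I ^ 2 = Ideal.span {y} * I) :
    ∀ t : ℕ, I ^ (t + 1) = Ideal.span {y ^ t} * I
  | 0 => by simp
  | t + 1 => by
    rw [pow_succ, pow_succ_eq_span_pow_mul hI t, mul_assoc, ← sq, hI, ← mul_assoc,
      Ideal.span_singleton_mul_span_singleton, ← pow_succ]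

lemma Ideal.exists_pow_smul_eq_smul {F : Type*} [AddCommGroup F] [Module R F] {I : Ideal R}
    {y x : R} (hI : I ^ 2 = Ideal.span {y} * I) {t : ℕ} (hx : x ∈ I ^ t) {k : F}
    (hk : k ∈ I • (⊤ : Submodule R F)) : ∃ c : F, y ^ t • c = x • k := by
  have hxk : x • k ∈ Ideal.span {y ^ t} • (⊤ : Submodule R F) := by
    have h := Submodule.smul_mem_smul hx hk
    rw [← Submodule.mul_smul, ← pow_succ, Ideal.pow_succ_eq_span_pow_mul hI,
      Submodule.mul_smul] at h
    exact Submodule.smul_mono le_rfl le_top h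
  rw [Submodule.ideal_span_singleton_smul] at hxk
  obtain ⟨c, -, hc⟩ := (Submodule.mem_smul_pointwise_iff_exists _ _ _).mp hxk
  exact ⟨c, hc⟩

lemma LinearMap.exists_smul_eq_smul_id_of_ker {F M : Type*} [AddCommGroup F] [Module R F]
    [AddCommGroup M] [Module R M] (p : F →ₗ[R] M) {a x : R} (hF : IsSMulRegular F a)
    (hM : IsSMulRegular M a) (hdiv : ∀ k ∈ LinearMap.ker p, ∃ c : F, a • c = x • k) :
    ∃ κ : Module.End R (LinearMap.ker p), a • κ = x • LinearMap.id := by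
  let μ : Module.End R (LinearMap.ker p) := a • LinearMap.id
  have hμ : Function.Injective μ := hF.submodule _ a
  have hrange : ∀ k, x • k ∈ LinearMap.range μ := fun ⟨k, hk⟩ => by
    obtain ⟨c, hc⟩ := hdiv k hk
    have hpc : p c = 0 := hM <| show a • p c = a • 0 by
      rw [smul_zero, ← map_smul, hc, map_smul, LinearMap.mem_ker.mp hk, smul_zero]
    exact ⟨⟨c, hpc⟩, Subtype.ext hc⟩
  refine ⟨(LinearEquiv.ofInjective μ hμ).symm.toLinearMap ∘ₗ
    (x • LinearMap.id).codRestrict _ hrange, LinearMap.ext fun k => ?_⟩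
  exact LinearEquiv.ofInjective_symm_apply (f := μ) (h := hμ) _

lemma TorsionFreeMod.isSMulRegular {M : Type*} [AddCommGroup M] [Module R M]
    (hM : TorsionFreeMod R M) {r : R} (hr : r ∈ nonZeroDivisors R) : IsSMulRegular M r :=
  isSMulRegular_iff_right_eq_zero_of_smul.mpr (hM r hr)

end Divisibility

section Annihilator

variable {R : Type*} [CommRing R]

lemma Submodule.exists_mem_smul_top_smul_eq_of_mem_mul {V : Type*} [AddCommGroup V] [Module R V]
    {I J : Ideal R} {a : R} {v : V} (hJ : ∀ x ∈ J, ∃ w : V, a • w = x • v) {z : R}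
    (hz : z ∈ I * J) : ∃ w ∈ I • (⊤ : Submodule R V), a • w = z • v := by
  refine Submodule.mul_induction_on hz (fun l hl x hx => ?_) ?_
  · obtain ⟨w, hw⟩ := hJ x hx
    exact ⟨l • w, Submodule.smul_mem_smul hl trivial, by rw [smul_comm, hw, smul_smul]⟩
  · rintro z₁ z₂ ⟨w₁, hw₁, e₁⟩ ⟨w₂, hw₂, e₂⟩
    exact ⟨w₁ + w₂, add_mem hw₁ hw₂, by rw [smul_add, e₁, e₂, add_smul]⟩

variable {K N E : Type*} [AddCommGroup K] [Module R K] [AddCommGroup N] [Module R N]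
  [AddCommGroup E] [Module R E] {δ : (K →ₗ[R] N) →ₗ[R] E}

lemma Module.mem_annihilator_of_smul_id_mem (hδ : Function.Surjective δ) {r : R}
    (hr : r • LinearMap.id ∈ Module.annihilator R E • (⊤ : Submodule R (Module.End R K))) :
    r ∈ Module.annihilator R E := by
  let Φ : Module.End R K →ₗ[R] (K →ₗ[R] N) →ₗ[R] E :=
    LinearMap.llcomp R _ _ _ δ ∘ₗ (LinearMap.llcomp R K K N).flip
  have hker : Module.annihilator R E • ⊤ ≤ LinearMap.ker Φ :=
    Submodule.smul_le.mpr fun l hl φ _ => by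
      ext f
      simp [Module.mem_annihilator.mp hl]
  rw [Module.mem_annihilator]
  intro e
  obtain ⟨f, rfl⟩ := hδ e
  simpa [Φ, LinearMap.llcomp_apply'] using LinearMap.congr_fun (LinearMap.mem_ker.mp (hker hr)) f

lemma Ideal.le_annihilator_of_pow_succ_mem {I : Ideal R} {y : R} {s : ℕ}
    (hreg : IsSMulRegular K (y ^ s))
    (hdiv : ∀ t, ∀ x ∈ I ^ t, ∃ κ : Module.End R K, y ^ t • κ = x • LinearMap.id)
    (hδ : Function.Surjective δ) (hy : y ^ (s + 1) ∈ Module.annihilator R E * I ^ s) :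
    I ≤ Module.annihilator R E := by
  have hyE : y ∈ Module.annihilator R E := by
    obtain ⟨ψ, hψ, hyψ⟩ := Submodule.exists_mem_smul_top_smul_eq_of_mem_mul (hdiv s) hy
    have hψ_eq : ψ = y • LinearMap.id := LinearMap.ext fun k => hreg <| by
      simpa [pow_succ, mul_smul] using LinearMap.congr_fun hyψ k
    exact Module.mem_annihilator_of_smul_id_mem hδ (hψ_eq ▸ hψ)
  intro x hx
  obtain ⟨κ, hκ⟩ := hdiv 1 x (by rwa [pow_one])
  rw [pow_one] at hκ
  exact Module.mem_annihilator_of_smul_id_mem hδ (hκ ▸ Submodule.smul_mem_smul hyE trivial)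

end Annihilator

theorem IsLocalRing.exists_surjective_ker_le_maximalIdeal_smul (R : Type*) [CommRing R]
    [IsLocalRing R] (M : Type*) [AddCommGroup M] [Module R M] [Module.Finite R M] :
    ∃ (n : ℕ) (p : (Fin n → R) →ₗ[R] M), Function.Surjective p ∧
      LinearMap.ker p ≤ maximalIdeal R • ⊤ := by
  let b := Module.finBasis (ResidueField R) (TensorProduct R (ResidueField R) M)
  choose f hf using fun i => TensorProduct.mk_surjective R M (ResidueField R)
    Ideal.Quotient.mk_surjective (b i)
  refine ⟨_, Fintype.linearCombination R f, ?_, fun v hv => ?_⟩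
  · rw [← LinearMap.range_eq_top, Fintype.range_linearCombination]
    exact IsLocalRing.span_eq_top_of_tmul_eq_basis f b hf
  have hb : ∑ i, algebraMap R (ResidueField R) (v i) • b i = 0 := by
    calc ∑ i, algebraMap R (ResidueField R) (v i) • b i = ∑ i, v i • b i := by
          simp only [algebraMap_smul]
      _ = TensorProduct.mk R (ResidueField R) M 1 (Fintype.linearCombination R f v) := by
          simp [Fintype.linearCombination_apply, ← hf]
      _ = 0 := by rw [LinearMap.mem_ker.mp hv, map_zero]
  have hcoord : ∀ i, v i ∈ maximalIdeal R := fun i =>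
    Ideal.Quotient.eq_zero_iff_mem.mp (Fintype.linearIndependent_iff.mp b.linearIndependent _ hb i)
  rw [pi_eq_sum_univ v]
  exact Submodule.sum_mem _ fun i _ => Submodule.smul_mem_smul (hcoord i) trivial

theorem annihilator_ext_eq_maximalIdeal_iff_reduction {R : Type u} [CommRing R]
    [IsLocalRing R]
    (hCM : ∃ r ∈ maximalIdeal R, r ∈ nonZeroDivisors R)
    (hminmult : ∃ y ∈ maximalIdeal R,
      (maximalIdeal R) ^ 2 = Ideal.span {y} * maximalIdeal R)
    (M N : Type u) [AddCommGroup M] [Module R M] [AddCommGroup N] [Module R N]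
    [Module.Finite R M]
    (hM : TorsionFreeMod R M) :
    Module.annihilator R (extModule R M N 1) = maximalIdeal R ↔
      (Module.annihilator R (extModule R M N 1) ≤ maximalIdeal R ∧
        ∃ s : ℕ, (maximalIdeal R) ^ (s + 1) =
          Module.annihilator R (extModule R M N 1) * (maximalIdeal R) ^ s) := by
  refine ⟨fun h => ⟨h.le, 0, by simp [h]⟩, fun ⟨hle, s, hs⟩ => le_antisymm hle ?_⟩
  obtain ⟨y, hym, hy⟩ := hminmult
  obtain ⟨r, hrm, hr⟩ := hCM
  have hyR := (maximalIdeal R).mem_nonZeroDivisors_of_sq_eq_span_mul hrm hr hy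
  obtain ⟨n, p, hp, hker⟩ := IsLocalRing.exists_surjective_ker_le_maximalIdeal_smul R M
  have : CategoryTheory.Projective (ModuleCat.of R (Fin n → R)) :=
    ModuleCat.projective_of_free (Pi.basisFun R (Fin n))
  have : CategoryTheory.Epi (ModuleCat.ofHom p) := (ModuleCat.epi_iff_surjective _).mpr hp
  let P := CategoryTheory.ProjectiveResolution.ofEpi (ModuleCat.ofHom p)
  have hπ : (P.π.f 0).hom = p := by rw [CategoryTheory.ProjectiveResolution.ofEpi_π_f_zero]; rfl
  obtain ⟨δ, hδ⟩ := P.exists_surjective_hom_ker_to_ext_one (ModuleCat.of R N)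
  have hreg (t : ℕ) : IsSMulRegular (Fin n → R) (y ^ t) := IsSMulRegular.pi fun _ =>
    (isRegular_iff_mem_nonZeroDivisors.mpr (pow_mem hyR t)).left.isSMulRegular
  refine Ideal.le_annihilator_of_pow_succ_mem ((hreg s).submodule _ _) (fun t x hx => ?_) hδ ?_
  · refine LinearMap.exists_smul_eq_smul_id_of_ker _ (hreg t) (hM.isSMulRegular (pow_mem hyR t))
      fun k hk => Ideal.exists_pow_smul_eq_smul hy hx (hker ?_)
    rwa [hπ] at hk
  · rw [← hs]
    exact Ideal.pow_mem_pow hym _
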